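/- arXiv:0804.3860 — 2 statements merged into one kernel-verified Lean document; each statement's English description precedes it below -/
import Mathlib

section
/- There is an absolute constant C > 0 such that the following holds. Let n be a positive integer and let k be a real number with n^{1/2} ≤ k ≤ n. Suppose x, z : {1,…,n} × {1,…,n} → ℝ satisfy: (1) x(i,j) ≤ 0 for all 1 ≤ i ≤ n and 1 ≤ j ≤ i; (2) x(i,j) ≤ n for all 1 ≤ i ≤ n and i < j ≤ n; (3) for every 1 ≤ i ≤ n, (∑_{j > i} x(i,j)) − (∑_{j < i} x(j,i)) ≤ n; (4) z(i,j) ≤ k for all i, j; (5) z(i,j) ≤ x(i,j) for all i, j; (6) 0 ≤ z(i,j) for all i, j; (7) 0 ≤ x(i,j) for all i, j. Then ∑_{1 ≤ i, j ≤ n} z(i,j) ≤ C · n² · √k. -/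
/-!
Split the pairs at a threshold `t`. On the near pairs `i < j ≤ i + t`, at most `n t` of them,
use `z ≤ k`. Every far pair `j > i + t` is crossed by one of the `n / t` cuts
`{1, …, q t} | {q t + 1, …, n}`, and there use `z ≤ x ≤` the `x`-weight across the cut.
Summing constraint (3) over `i ≤ m` telescopes away the pairs inside `{1, …, m}`, so the weight
across the cut at `m` is at most `m n ≤ n²`. Below the diagonal `z ≤ x ≤ 0`. Hence
`∑ z ≤ n t k + (n / t) n²`, and `t = ⌈n / √k⌉` makes this at most `3 n² √k`.
-/

open Finset

def netOutflow (x : ℕ → ℕ → ℝ) (n i : ℕ) : ℝ :=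
  ∑ j ∈ Ioc i n, x i j - ∑ j ∈ Ico 1 i, x j i

def cutSum (x : ℕ → ℕ → ℝ) (n m : ℕ) : ℝ :=
  ∑ i ∈ Icc 1 m, ∑ j ∈ Ioc m n, x i j

lemma sum_Icc_sum_Ioc_comm {M : Type*} [AddCommMonoid M] (m : ℕ) (f : ℕ → ℕ → M) :
    ∑ i ∈ Icc 1 m, ∑ j ∈ Ioc i m, f i j = ∑ j ∈ Icc 1 m, ∑ i ∈ Ico 1 j, f i j :=
  sum_comm' fun i j => by simp only [mem_Icc, mem_Ioc, mem_Ico]; omega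

lemma sum_netOutflow_eq_cutSum (x : ℕ → ℕ → ℝ) {n m : ℕ} (hmn : m ≤ n) :
    ∑ i ∈ Icc 1 m, netOutflow x n i = cutSum x n m := by
  have split_row : ∀ i ∈ Icc 1 m,
      ∑ j ∈ Ioc i n, x i j = ∑ j ∈ Ioc i m, x i j + ∑ j ∈ Ioc m n, x i j :=
    fun i hi => (sum_Ioc_consecutive _ (mem_Icc.mp hi).2 hmn).symm
  simp only [netOutflow, cutSum, sum_sub_distrib, sum_congr rfl split_row, sum_add_distrib,
    sum_Icc_sum_Ioc_comm]
  ring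

lemma cutSum_le {x : ℕ → ℕ → ℝ} {n m : ℕ} {c : ℝ} (hmn : m ≤ n)
    (hflow : ∀ i ∈ Icc 1 n, netOutflow x n i ≤ c) : cutSum x n m ≤ m * c := by
  rw [← sum_netOutflow_eq_cutSum x hmn]
  calc ∑ i ∈ Icc 1 m, netOutflow x n i ≤ ∑ _i ∈ Icc 1 m, c :=
        sum_le_sum fun i hi => hflow i (Icc_subset_Icc_right hmn hi)
    _ = m * c := by simp

lemma sum_ite_crossing_eq_cutSum (x : ℕ → ℕ → ℝ) {n m : ℕ} (hmn : m ≤ n) :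
    ∑ i ∈ Icc 1 n, ∑ j ∈ Icc 1 n, (if i ≤ m ∧ m < j then x i j else 0) = cutSum x n m := by
  calc ∑ i ∈ Icc 1 n, ∑ j ∈ Icc 1 n, (if i ≤ m ∧ m < j then x i j else 0)
      = ∑ i ∈ Icc 1 n, if i ≤ m then ∑ j ∈ Ioc m n, x i j else 0 := by
        refine sum_congr rfl fun i hi => ?_
        split_ifs with him
        · rw [← sum_filter]
          congr 1
          ext j
          simp only [mem_filter, mem_Icc, mem_Ioc]
          omega
        · simp [him]
    _ = cutSum x n m := by
        rw [← sum_filter, cutSum]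
        congr 1
        ext i
        simp only [mem_filter, mem_Icc]
        omega

lemma exists_mul_mem_Ico {i j n t : ℕ} (ht : 0 < t) (hfar : i + t < j) (hjn : j ≤ n) :
    ∃ q ∈ Icc 1 (n / t), i ≤ q * t ∧ q * t < j := by
  have h₁ := Nat.div_add_mod' i t
  have h₂ := Nat.mod_lt i ht
  have hlt : (i / t + 1) * t < j := by rw [add_mul, one_mul]; omega
  refine ⟨i / t + 1, mem_Icc.mpr ⟨Nat.le_add_left 1 _, ?_⟩, by rw [add_mul, one_mul]; omega, hlt⟩
  exact (Nat.le_div_iff_mul_le ht).mpr (by omega)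

lemma sum_far_le_sum_cutSum {x : ℕ → ℕ → ℝ} {n t : ℕ} (ht : 0 < t)
    (hx : ∀ i ∈ Icc 1 n, ∀ j ∈ Icc 1 n, 0 ≤ x i j) :
    ∑ i ∈ Icc 1 n, ∑ j ∈ Icc 1 n, (if i + t < j then x i j else 0)
      ≤ ∑ q ∈ Icc 1 (n / t), cutSum x n (q * t) := by
  have crossed : ∀ i ∈ Icc 1 n, ∀ j ∈ Icc 1 n, (if i + t < j then x i j else 0)
      ≤ ∑ q ∈ Icc 1 (n / t), if i ≤ q * t ∧ q * t < j then x i j else 0 := by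
    intro i hi j hj
    have terms_nonneg : ∀ q ∈ Icc 1 (n / t),
        0 ≤ if i ≤ q * t ∧ q * t < j then x i j else 0 := fun q _ => by
      split_ifs
      exacts [hx i hi j hj, le_rfl]
    split_ifs with hfar
    · obtain ⟨q, hq, hcross⟩ := exists_mul_mem_Ico ht hfar (mem_Icc.mp hj).2
      simpa [hcross] using single_le_sum terms_nonneg hq
    · exact sum_nonneg terms_nonneg
  have hqt : ∀ q ∈ Icc 1 (n / t), q * t ≤ n := fun q hq =>
    (Nat.le_div_iff_mul_le ht).mp (mem_Icc.mp hq).2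
  calc ∑ i ∈ Icc 1 n, ∑ j ∈ Icc 1 n, (if i + t < j then x i j else 0)
      ≤ ∑ i ∈ Icc 1 n, ∑ j ∈ Icc 1 n, ∑ q ∈ Icc 1 (n / t),
          if i ≤ q * t ∧ q * t < j then x i j else 0 :=
        sum_le_sum fun i hi => sum_le_sum fun j hj => crossed i hi j hj
    _ = ∑ q ∈ Icc 1 (n / t), ∑ i ∈ Icc 1 n, ∑ j ∈ Icc 1 n,
          if i ≤ q * t ∧ q * t < j then x i j else 0 := by
        simp only [sum_comm (s := Icc 1 n) (t := Icc 1 (n / t))]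
    _ = ∑ q ∈ Icc 1 (n / t), cutSum x n (q * t) :=
        sum_congr rfl fun q hq => sum_ite_crossing_eq_cutSum x (hqt q hq)

lemma sum_ite_mem_Ioc_le (s : Finset ℕ) (i t : ℕ) {k : ℝ} (hk : 0 ≤ k) :
    ∑ j ∈ s, (if j ∈ Ioc i (i + t) then k else 0) ≤ t * k := by
  rw [sum_ite_mem, sum_const, nsmul_eq_mul]
  gcongr
  calc (s ∩ Ioc i (i + t)).card ≤ (Ioc i (i + t)).card := card_le_card inter_subset_right
    _ = t := by simp

lemma sum_le_of_threshold {x z : ℕ → ℕ → ℝ} {n t : ℕ} {k c : ℝ} (ht : 0 < t) (hk : 0 ≤ k)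
    (hc : 0 ≤ c) (hx_lower : ∀ i ∈ Icc 1 n, ∀ j ∈ Icc 1 i, x i j ≤ 0)
    (hflow : ∀ i ∈ Icc 1 n, netOutflow x n i ≤ c)
    (hzk : ∀ i ∈ Icc 1 n, ∀ j ∈ Icc 1 n, z i j ≤ k)
    (hzx : ∀ i ∈ Icc 1 n, ∀ j ∈ Icc 1 n, z i j ≤ x i j)
    (hx : ∀ i ∈ Icc 1 n, ∀ j ∈ Icc 1 n, 0 ≤ x i j) :
    ∑ i ∈ Icc 1 n, ∑ j ∈ Icc 1 n, z i j ≤ n * (t * k) + (n / t : ℕ) * (n * c) := by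
  have near_add_far : ∀ i ∈ Icc 1 n, ∀ j ∈ Icc 1 n,
      z i j ≤ (if j ∈ Ioc i (i + t) then k else 0) + (if i + t < j then x i j else 0) := by
    intro i hi j hj
    have hz := hzx i hi j hj
    by_cases hji : j ≤ i
    · have hx0 := hx_lower i hi j (mem_Icc.mpr ⟨(mem_Icc.mp hj).1, hji⟩)
      have hnear : j ∉ Ioc i (i + t) := by simp only [mem_Ioc]; omega
      have hfar : ¬i + t < j := by omega
      simp only [hnear, hfar, if_false]
      linarith
    by_cases hfar : i + t < j
    · have hnear : j ∉ Ioc i (i + t) := by simp only [mem_Ioc]; omega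
      simp only [hnear, hfar, if_false, if_true]
      linarith
    · have hnear : j ∈ Ioc i (i + t) := by simp only [mem_Ioc]; omega
      simp only [hnear, hfar, if_false, if_true]
      linarith [hzk i hi j hj]
  have near : ∑ i ∈ Icc 1 n, ∑ j ∈ Icc 1 n, (if j ∈ Ioc i (i + t) then k else 0) ≤ n * (t * k) :=
    calc _ ≤ ∑ _i ∈ Icc 1 n, t * k := sum_le_sum fun i _ => sum_ite_mem_Ioc_le _ i t hk
      _ = n * (t * k) := by simp
  have far : ∑ i ∈ Icc 1 n, ∑ j ∈ Icc 1 n, (if i + t < j then x i j else 0)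
      ≤ (n / t : ℕ) * (n * c) :=
    calc _ ≤ ∑ q ∈ Icc 1 (n / t), cutSum x n (q * t) := sum_far_le_sum_cutSum ht hx
      _ ≤ ∑ _q ∈ Icc 1 (n / t), n * c := sum_le_sum fun q hq => by
          have hqt : q * t ≤ n := (Nat.le_div_iff_mul_le ht).mp (mem_Icc.mp hq).2
          calc cutSum x n (q * t) ≤ (q * t : ℕ) * c := cutSum_le hqt hflow
            _ ≤ n * c := by gcongr
      _ = (n / t : ℕ) * (n * c) := by simp
  calc ∑ i ∈ Icc 1 n, ∑ j ∈ Icc 1 n, z i j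
      ≤ ∑ i ∈ Icc 1 n, ∑ j ∈ Icc 1 n,
          ((if j ∈ Ioc i (i + t) then k else 0) + (if i + t < j then x i j else 0)) :=
        sum_le_sum fun i hi => sum_le_sum fun j hj => near_add_far i hi j hj
    _ ≤ n * (t * k) + (n / t : ℕ) * (n * c) := by
        simp only [sum_add_distrib]
        exact add_le_add near far

lemma natCeil_div_sqrt_mul_le {n k : ℝ} (hk : 0 < k) (hkn : k ≤ n) (hn : 1 ≤ n) :
    (⌈n / √k⌉₊ : ℝ) * k ≤ 2 * n * √k := by
  have hs : 0 < √k := Real.sqrt_pos.mpr hk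
  have hsq : √k * √k = k := Real.mul_self_sqrt hk.le
  have hsn : √k ≤ n := by nlinarith
  have hceil := Nat.ceil_lt_add_one (div_nonneg (by linarith : (0:ℝ) ≤ n) hs.le)
  calc (⌈n / √k⌉₊ : ℝ) * k ≤ (n / √k + 1) * k := by gcongr
    _ = n * √k + √k * √k := by field_simp; rw [Real.sq_sqrt hk.le]
    _ ≤ 2 * n * √k := by nlinarith

lemma natDiv_natCeil_div_sqrt_le (n : ℕ) {k : ℝ} (hk : 0 < k) :
    ((n / ⌈n / √k⌉₊ : ℕ) : ℝ) ≤ √k := by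
  rcases n.eq_zero_or_pos with rfl | hn
  · simp
  have hs : 0 < √k := Real.sqrt_pos.mpr hk
  have hpos : (0 : ℝ) < n / √k := by positivity
  calc ((n / ⌈n / √k⌉₊ : ℕ) : ℝ) ≤ n / ⌈n / √k⌉₊ := Nat.cast_div_le
    _ ≤ n / (n / √k) := div_le_div_of_nonneg_left (Nat.cast_nonneg n) hpos (Nat.le_ceil _)
    _ = √k := by field_simp

/-- There is an absolute constant `C > 0` such that for every positive integer `n` and
every real `k` with `√n ≤ k ≤ n`, any functions `x z : {1,…,n}² → ℝ` satisfying the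
linear constraints (1)–(7) of the LP have `∑ z(i,j) ≤ C · n² · √k`. -/
theorem lp_bound :
    ∃ C : ℝ, 0 < C ∧
      ∀ (n : ℕ), 0 < n →
      ∀ (k : ℝ), Real.sqrt n ≤ k → k ≤ n →
      ∀ (x z : ℕ → ℕ → ℝ),
        (∀ i ∈ Finset.Icc 1 n, ∀ j ∈ Finset.Icc 1 i, x i j ≤ 0) →
        (∀ i ∈ Finset.Icc 1 n, ∀ j, i < j → j ≤ n → x i j ≤ n) →
        (∀ i ∈ Finset.Icc 1 n,
          (∑ j ∈ Finset.Ioc i n, x i j) - (∑ j ∈ Finset.Ico 1 i, x j i) ≤ n) →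
        (∀ i ∈ Finset.Icc 1 n, ∀ j ∈ Finset.Icc 1 n, z i j ≤ k) →
        (∀ i ∈ Finset.Icc 1 n, ∀ j ∈ Finset.Icc 1 n, z i j ≤ x i j) →
        (∀ i ∈ Finset.Icc 1 n, ∀ j ∈ Finset.Icc 1 n, 0 ≤ z i j) →
        (∀ i ∈ Finset.Icc 1 n, ∀ j ∈ Finset.Icc 1 n, 0 ≤ x i j) →
        (∑ i ∈ Finset.Icc 1 n, ∑ j ∈ Finset.Icc 1 n, z i j) ≤
          C * (n : ℝ) ^ 2 * Real.sqrt k := by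
  refine ⟨3, by norm_num, ?_⟩
  intro n hn k hnk hkn x z hx_lower _ hflow hzk hzx _ hx
  have hn1 : (1 : ℝ) ≤ n := by exact_mod_cast hn
  have hk : 0 < k := lt_of_lt_of_le (Real.sqrt_pos.mpr (by positivity)) hnk
  set t := ⌈(n : ℝ) / √k⌉₊
  have ht : 0 < t := Nat.ceil_pos.mpr (by positivity)
  calc ∑ i ∈ Icc 1 n, ∑ j ∈ Icc 1 n, z i j ≤ n * (t * k) + (n / t : ℕ) * (n * n) :=
        sum_le_of_threshold ht hk.le (Nat.cast_nonneg n) hx_lower hflow hzk hzx hx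
    _ ≤ n * (2 * n * √k) + √k * (n * n) := by
        gcongr _ * ?_ + ?_ * _
        exacts [natCeil_div_sqrt_mul_le hk hkn hn1, natDiv_natCeil_div_sqrt_le n hk]
    _ = 3 * n ^ 2 * √k := by ring
end

section
/- Let n ≥ 3 be an integer and p a natural number with (3/2)^p ≥ n. Let f(p) = 3^{p+1}/(2·3^{p+1} − 2^{p+1}), t_0 = n^{f(p)}, and t_i = t_0^{2 − (2/3)^i} for i = 0, 1, …, p+1. Then ∑_{i=1}^{p+1} n² · t_i^{3/2}/t_{i−1} + n² · t_0 = (p + 2) · n^{2 + f(p)}, and n^{2 + f(p)} < 2 · n^{5/2}. -/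
/-!
With `t i = t0 ^ (2 - (2/3)^i)` the exponents satisfy `(3/2)(2 - (2/3)^(i+1)) - (2 - (2/3)^i) = 1`,
so every summand equals `n² · t0 = n^(2+f)` and the left side is `p + 2` copies of it.
For the bound, `f - 1/2 = 1/(6x - 2)` with `x = (3/2)^p ≥ n`, and `n^(1/(6x-2)) < 2` because
`2^(6x-2) ≥ 1 + (6x - 2) log 2 > x ≥ n`.
-/

open Finset Real

lemma rpow_two_sub_two_thirds_pow_succ_div {b : ℝ} (hb : 0 < b) (i : ℕ) :
    (b ^ (2 - (2 / 3 : ℝ) ^ (i + 1))) ^ (3 / 2 : ℝ) / b ^ (2 - (2 / 3 : ℝ) ^ i) = b := by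
  rw [← rpow_mul hb.le, ← rpow_sub hb]
  convert rpow_one b using 2
  ring

lemma sum_Icc_mul_rpow_three_halves_div {b : ℝ} (hb : 0 < b) (c : ℝ) (t : ℕ → ℝ)
    (ht : ∀ i, t i = b ^ (2 - (2 / 3 : ℝ) ^ i)) (m : ℕ) :
    ∑ i ∈ Icc 1 m, c * t i ^ (3 / 2 : ℝ) / t (i - 1) = m * (c * b) := by
  have hterm : ∀ i ∈ Icc 1 m, c * t i ^ (3 / 2 : ℝ) / t (i - 1) = c * b := by
    intro i hi
    obtain ⟨j, rfl⟩ : ∃ j, i = j + 1 := ⟨i - 1, by grind⟩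
    rw [mul_div_assoc, ht, ht, Nat.add_sub_cancel, rpow_two_sub_two_thirds_pow_succ_div hb]
  rw [sum_congr rfl hterm, sum_const, Nat.card_Icc, nsmul_eq_mul, Nat.add_sub_cancel]

lemma three_pow_succ_div_eq (p : ℕ) :
    (3 : ℝ) ^ (p + 1) / (2 * 3 ^ (p + 1) - 2 ^ (p + 1)) = 1 / 2 + (6 * (3 / 2 : ℝ) ^ p - 2)⁻¹ := by
  have hx : 6 * (3 / 2 : ℝ) ^ p - 2 ≠ 0 := by
    linarith [one_le_pow₀ (M₀ := ℝ) (n := p) (a := 3 / 2) (by norm_num)]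
  have h3 : (3 : ℝ) ^ p = 2 ^ p * (3 / 2) ^ p := by
    rw [div_pow, mul_div_cancel₀ _ (by positivity)]
  have hD : (2 : ℝ) * 3 ^ (p + 1) - 2 ^ (p + 1) = 2 ^ p * (6 * (3 / 2) ^ p - 2) := by
    rw [pow_succ, pow_succ, h3]; ring
  rw [hD, pow_succ, h3, mul_assoc, mul_div_mul_left _ _ (by positivity), div_eq_iff hx, add_mul,
    inv_mul_cancel₀ hx]
  ring

lemma lt_two_rpow_six_mul_sub_two {x : ℝ} (hx : 1 ≤ x) : x < 2 ^ (6 * x - 2) := by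
  have hlog : (1 / 2 : ℝ) < log 2 := by linarith [log_two_gt_d9]
  calc x < log 2 * (6 * x - 2) + 1 := by nlinarith
    _ ≤ 2 ^ (6 * x - 2) := by rw [rpow_def_of_pos two_pos]; exact add_one_le_exp _

lemma rpow_inv_six_mul_sub_two_lt_two {n x : ℝ} (hn : 0 ≤ n) (hnx : n ≤ x) (hx : 1 ≤ x) :
    n ^ (6 * x - 2)⁻¹ < 2 := by
  rw [rpow_inv_lt_iff_of_pos hn zero_le_two (by linarith)]
  exact hnx.trans_lt (lt_two_rpow_six_mul_sub_two hx)

/-- For `n ≥ 3` and natural `p` with `(3/2)^p ≥ n`, setting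
`f = 3^{p+1}/(2·3^{p+1} − 2^{p+1})`, `t0 = n^f` and `t i = t0^{2 − (2/3)^i}`, one has
`∑_{i=1}^{p+1} n² · t i^{3/2}/t (i−1) + n² · t0 = (p+2) · n^{2+f}` and
`n^{2+f} < 2 · n^{5/2}`. -/
theorem runtime_bound (n : ℕ) (hn : 3 ≤ n) (p : ℕ)
    (hp : (n : ℝ) ≤ (3 / 2 : ℝ) ^ p)
    (f : ℝ) (hf : f = (3 : ℝ) ^ (p + 1) / (2 * 3 ^ (p + 1) - 2 ^ (p + 1)))
    (t0 : ℝ) (ht0 : t0 = (n : ℝ) ^ f)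
    (t : ℕ → ℝ) (ht : ∀ i : ℕ, t i = t0 ^ ((2 : ℝ) - (2 / 3 : ℝ) ^ i)) :
    (∑ i ∈ Finset.Icc 1 (p + 1), (n : ℝ) ^ 2 * t i ^ (3 / 2 : ℝ) / t (i - 1)) +
        (n : ℝ) ^ 2 * t0 = ((p : ℝ) + 2) * (n : ℝ) ^ ((2 : ℝ) + f) ∧
      (n : ℝ) ^ ((2 : ℝ) + f) < 2 * (n : ℝ) ^ ((5 : ℝ) / 2) := by
  have hn0 : (0 : ℝ) < n := Nat.cast_pos.mpr (by omega)
  have hbase : (n : ℝ) ^ 2 * t0 = (n : ℝ) ^ ((2 : ℝ) + f) := by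
    rw [ht0, rpow_add hn0, rpow_two]
  constructor
  · rw [sum_Icc_mul_rpow_three_halves_div (ht0 ▸ rpow_pos_of_pos hn0 f) _ t ht, hbase]
    push_cast
    ring
  · have hsplit :
        (n : ℝ) ^ ((2 : ℝ) + f) = n ^ ((5 : ℝ) / 2) * n ^ (6 * (3 / 2 : ℝ) ^ p - 2)⁻¹ := by
      rw [← rpow_add hn0, hf, three_pow_succ_div_eq]
      ring_nf
    rw [hsplit, mul_comm 2]
    exact mul_lt_mul_of_pos_left
      (rpow_inv_six_mul_sub_two_lt_two hn0.le hp (one_le_pow₀ (by norm_num))) (by positivity)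
end
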